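/- The set {c ∈ ℚ : there exists y ∈ ℚ with y² = c² + 8} is infinite; consequently, the set of c ∈ ℚ for which the map z ↦ z² + 2/(c² + 8) has a rational fixed point (hence an affine rational preperiodic point) is infinite. -/

import Mathlib

/-!
The substitution `c = t - 2/t` rationally parametrizes the conic `y² = c² + 8` through `(1, 3)`,
with `y = t + 2/t`; as `t` runs over the positive rationals, `c` takes infinitely many values.
For such `c` the fixed-point equation `x² - x + 2/y² = 0` has discriminant `(c/y)²`, which
gives the rational fixed point `x = (y + c)/(2y)`.
-/

theorem sub_div_sq_add_eq_add_div_sq {K : Type*} [Field K] {t : K} (ht : t ≠ 0) (a : K) :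
    (t - a / t) ^ 2 + 4 * a = (t + a / t) ^ 2 := by
  field_simp
  ring

theorem strictMonoOn_sub_div {K : Type*} [Field K] [LinearOrder K] [IsStrictOrderedRing K]
    {a : K} (ha : 0 ≤ a) : StrictMonoOn (fun t => t - a / t) (Set.Ioi 0) := by
  intro s hs t _ hst
  have : a / t ≤ a / s := div_le_div_of_nonneg_left ha hs hst.le
  simp only
  linarith

theorem add_div_two_mul_sq_add_div_eq {K : Type*} [Field K] [NeZero (2 : K)] {a c y : K}
    (hy : y ≠ 0) (h : y ^ 2 = c ^ 2 + 4 * a) :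
    ((y + c) / (2 * y)) ^ 2 + a / (c ^ 2 + 4 * a) = (y + c) / (2 * y) := by
  rw [← h]
  field_simp
  linear_combination -h

/-- The set of rational `c` with `c² + 8` a rational square is infinite;
consequently, the set of `c ∈ ℚ` for which `z ↦ z² + 2/(c² + 8)` has a rational fixed
point is infinite. -/
theorem infinitely_many_with_fixed_point :
    {c : ℚ | ∃ y : ℚ, y ^ 2 = c ^ 2 + 8}.Infinite ∧
    {c : ℚ | ∃ x : ℚ, x ^ 2 + 2 / (c ^ 2 + 8) = x}.Infinite := by
  have hsq : {c : ℚ | ∃ y : ℚ, y ^ 2 = c ^ 2 + 8}.Infinite := by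
    refine ((Set.Ioi_infinite (0 : ℚ)).image
      (strictMonoOn_sub_div (by norm_num : (0 : ℚ) ≤ 2)).injOn).mono ?_
    rintro _ ⟨t, ht, rfl⟩
    refine ⟨t + 2 / t, ?_⟩
    linear_combination -sub_div_sq_add_eq_add_div_sq ht.ne' (2 : ℚ)
  refine ⟨hsq, hsq.mono ?_⟩
  rintro c ⟨y, hy⟩
  have hy0 : y ≠ 0 := by
    rintro rfl
    nlinarith [sq_nonneg c]
  have h8 : (4 : ℚ) * 2 = 8 := by norm_num
  exact ⟨(y + c) / (2 * y), by
    simpa only [h8] using add_div_two_mul_sq_add_div_eq (a := (2 : ℚ)) hy0 (by rw [h8]; exact hy)⟩
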